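/- arXiv:1308.3810 — 4 statements merged into one kernel-verified Lean document; each statement's English description precedes it below -/
import Mathlib

section
/- For all r, s ≥ 1, there exists an (r-1)^(2^(s-1)) letter (r-1)^(2^(s-1))-by-s formation (a concatenation of s permutations of (r-1)^(2^(s-1)) distinct letters) that contains no binary (r,s)-formation. -/
/-- The increasing sequence `1 2 ... c`. -/
def Ic (c : ℕ) : List ℕ := List.range' 1 c

/-- The decreasing sequence `c (c-1) ... 1`. -/
def Dc (c : ℕ) : List ℕ := (Ic c).reverse

/-- `k` concatenated copies of the list `l`. -/
def rep (l : List ℕ) (k : ℕ) : List ℕ := (List.replicate k l).flatten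

/-- `up(c,t)`: the sequence `1 2 ... c` repeated `t` times. -/
def upSeq (c t : ℕ) : List ℕ := rep (Ic c) t

/-- `alt(c,k)`: the concatenation of `k` permutations alternating `I_c, D_c, I_c, ...`. -/
def altSeq (c k : ℕ) : List ℕ :=
  ((List.range k).map (fun i => if i % 2 = 0 then Ic c else Dc c)).flatten

/-- A sequence `s` contains `u` if some subsequence of `s` is obtained from `u`
by an injective renaming of its letters. -/
def Contains (s u : List ℕ) : Prop :=
  ∃ f : ℕ → ℕ, Function.Injective f ∧ (u.map f).Sublist s

/-- `F` is an `(r,s)`-formation: a concatenation of `s` permutations of a set of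
`r` distinct letters. -/
def IsFormation (r s : ℕ) (F : List ℕ) : Prop :=
  ∃ (A : Finset ℕ) (ps : List (List ℕ)), A.card = r ∧ ps.length = s ∧
    (∀ p ∈ ps, p.Nodup ∧ p.toFinset = A) ∧ F = ps.flatten

/-- `F` is a binary `(r,s)`-formation: an `(r,s)`-formation in which every
constituent permutation equals a fixed permutation `p` or its reverse. -/
def IsBinaryFormation (r s : ℕ) (F : List ℕ) : Prop :=
  ∃ (A : Finset ℕ) (p : List ℕ) (ps : List (List ℕ)), A.card = r ∧
    p.Nodup ∧ p.toFinset = A ∧ ps.length = s ∧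
    (∀ q ∈ ps, q = p ∨ q = p.reverse) ∧ F = ps.flatten

/-- The formation width of `u`: the minimum `s` such that there exists `r` for which
every `(r,s)`-formation contains `u`. -/
noncomputable def fw (u : List ℕ) : ℕ :=
  sInf {s | ∃ r, ∀ F, IsFormation r s F → Contains F u}

/-- The formation length of `u`: the minimum `r` such that every `(r, fw u)`-formation
contains `u`. -/
noncomputable def fl (u : List ℕ) : ℕ :=
  sInf {r | ∀ F, IsFormation r (fw u) F → Contains F u}

/-- For a permutation `π` of `{1,...,c}`, the sequence `I_π = π(1) π(2) ... π(c)`. -/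
def Iperm {c : ℕ} (π : Equiv.Perm (Fin c)) : List ℕ :=
  List.ofFn (fun i => (π i).val + 1)

/-- `l(u)` for a sequence `u` on letters `1,...,c`: the smallest `k` such that
`up(c,k)` contains `u`. -/
noncomputable def lval (c : ℕ) (u : List ℕ) : ℕ := sInf {k | Contains (upSeq c k) u}

/-- `r(u)` for a sequence `u` on letters `1,...,c`: the smallest `k` such that
`alt(c,k)` contains `u`. -/
noncomputable def rval (c : ℕ) (u : List ℕ) : ℕ := sInf {k | Contains (altSeq c k) u}

/-- The binary formation `I_c^{e_1} D_c^{e_2} I_c^{e_3} ...` determined by the list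
of exponents `e` (blocks alternate starting with `I_c`). -/
def altBlocks (c : ℕ) (e : List ℕ) : List ℕ :=
  (e.zipIdx.map (fun p => rep (if p.2 % 2 = 0 then Ic c else Dc c) p.1)).flatten

/-!
Take as letters the digit vectors `x : Fin m → Fin b`, with `b = r - 1` and `m = 2 ^ (s - 1)`.
Block `k` lists all letters in lexicographic order, except that the order of digit `j` is reversed
whenever an odd number of the bits of `j` below position `k` are set. Every letter occurs once in
every block, so a binary formation on a set `A` of letters sitting inside must have its `k`-th
block inside the `k`-th block. For two letters of `A` first differing at digit `c`, their relative
order along the blocks is then, up to a global flip, both the pattern of blocks equal to `p` and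
the parity sequence of `c`; the changes of the latter spell out the bits of `c < 2 ^ (s - 1)`. So
all pairs of letters of `A` first differ at the same digit, which is thus injective on `A`, and
`r ≤ b`.
-/

open Function
open scoped List

theorem List.pair_sublist_or_of_mem {α : Type*} {l : List α} {x y : α} (hx : x ∈ l)
    (hy : y ∈ l) (hxy : x ≠ y) : [x, y] <+ l ∨ [y, x] <+ l := by
  let R : α → α → Prop := fun a b => [a, b] <+ l ∨ [b, a] <+ l
  have : Std.Symm R := ⟨fun _ _ => Or.symm⟩
  exact (List.pairwise_of_forall_sublist (R := R) Or.inl).forall hx hy hxy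

theorem List.length_filter_mem_of_nodup {α : Type*} [DecidableEq α] {l p : List α} (hl : l.Nodup)
    (hp : p.Nodup) (hpl : ∀ x ∈ p, x ∈ l) : (l.filter (· ∈ p)).length = p.length :=
  ((List.perm_ext_iff_of_nodup (hl.filter _) hp).mpr fun x => by simpa using hpl x).length_eq

theorem List.eq_map_filter_of_flatten_sublist {α : Type*} {S : α → Bool} {n : ℕ}
    {qs Bs : List (List α)} (hlen : qs.length = Bs.length)
    (hq : ∀ q ∈ qs, q.length = n ∧ ∀ x ∈ q, S x)
    (hB : ∀ B ∈ Bs, (B.filter S).length = n)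
    (h : qs.flatten <+ Bs.flatten) : qs = Bs.map (List.filter S) := by
  have hlengths : qs.map List.length = (Bs.map (List.filter S)).map List.length := by
    rw [List.map_map]
    refine List.ext_get (by simp [hlen]) fun i h₁ h₂ => ?_
    simp only [List.get_eq_getElem, List.getElem_map, Function.comp_apply]
    rw [(hq _ (List.getElem_mem _)).1, hB _ (List.getElem_mem _)]
  have hfilter : qs.flatten.filter S = qs.flatten := List.filter_eq_self.mpr fun x hx => by
    obtain ⟨q, hq', hxq⟩ := List.mem_flatten.mp hx
    exact (hq q hq').2 x hxq
  have hsub : qs.flatten <+ (Bs.map (List.filter S)).flatten := by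
    simpa only [hfilter, List.filter_flatten] using h.filter S
  refine List.eq_iff_flatten_eq.mpr ⟨hsub.eq_of_length ?_, hlengths⟩
  simp only [List.length_flatten, hlengths]

section FirstDiff

variable {ι : Type*} [LinearOrder ι] {β : ι → Type*}

def IsFirstDiff (x y : ∀ i, β i) (c : ι) : Prop := x c ≠ y c ∧ ∀ j < c, x j = y j

theorem IsFirstDiff.symm {x y : ∀ i, β i} {c : ι} (h : IsFirstDiff x y c) : IsFirstDiff y x c :=
  ⟨h.1.symm, fun j hj => (h.2 j hj).symm⟩

theorem IsFirstDiff.ne {x y : ∀ i, β i} {c : ι} (h : IsFirstDiff x y c) : x ≠ y :=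
  fun hxy => h.1 (hxy ▸ rfl)

theorem exists_isFirstDiff [WellFoundedLT ι] {x y : ∀ i, β i} (h : x ≠ y) :
    ∃ c, IsFirstDiff x y c := by
  obtain ⟨c, hc, hmin⟩ := wellFounded_lt.has_min {j | x j ≠ y j} (Function.ne_iff.mp h)
  exact ⟨c, hc, fun j hj => by_contra fun hne => hmin j hne hj⟩

theorem IsFirstDiff.lt_of_toLex_lt [∀ i, LinearOrder (β i)] {x y : ∀ i, β i} {c : ι}
    (h : IsFirstDiff x y c) (hlt : toLex x < toLex y) : x c < y c :=
  (Pi.apply_le_of_toLex hlt.le h.2).lt_of_ne h.1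

end FirstDiff

def lowBitsParity (c : ℕ) : ℕ → Bool
  | 0 => false
  | k + 1 => xor (lowBitsParity c k) (c.testBit k)

theorem eq_of_lowBitsParity_eq_xor {t c c' : ℕ} {e : ℕ → Bool} {d d' : Bool}
    (hc : c < 2 ^ t) (hc' : c' < 2 ^ t) (h : ∀ k ≤ t, lowBitsParity c k = xor (e k) d)
    (h' : ∀ k ≤ t, lowBitsParity c' k = xor (e k) d') : c = c' := by
  refine Nat.eq_of_testBit_eq fun i => ?_
  rcases lt_or_ge i t with hi | hi
  · have hbit : ∀ c, c.testBit i = xor (lowBitsParity c i) (lowBitsParity c (i + 1)) := by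
      simp [lowBitsParity]
    rw [hbit, hbit, h i hi.le, h (i + 1) hi, h' i hi.le, h' (i + 1) hi]
    simp [Bool.xor_left_comm, Bool.xor_comm]
  · have hle : 2 ^ t ≤ 2 ^ i := Nat.pow_le_pow_right two_pos hi
    rw [Nat.testBit_lt_two_pow (hc.trans_le hle), Nat.testBit_lt_two_pow (hc'.trans_le hle)]

section Twist

variable {b m : ℕ}

/-- Blocks `k` and `k + 1` are twisted differently exactly at the digits `j` with `j.testBit k`. -/
def twist (k : ℕ) (x : Fin m → Fin b) : Fin m → Fin b :=
  fun j => if lowBitsParity j k then (x j).rev else x j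

@[simp]
theorem twist_twist (k : ℕ) (x : Fin m → Fin b) : twist k (twist k x) = x := by
  funext j
  unfold twist
  split_ifs <;> simp

theorem twist_involutive (k : ℕ) : Involutive (twist (b := b) (m := m) k) :=
  twist_twist k

theorem isFirstDiff_twist {x y : Fin m → Fin b} {c : Fin m} (h : IsFirstDiff x y c) (k : ℕ) :
    IsFirstDiff (twist k x) (twist k y) c := by
  refine ⟨?_, fun j hj => ?_⟩
  · unfold twist; split_ifs <;> simpa using h.1
  · unfold twist; rw [h.2 j hj]

theorem IsFirstDiff.lowBitsParity_eq_of_toLex_twist_lt {x y : Fin m → Fin b} {c : Fin m}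
    (h : IsFirstDiff x y c) {k : ℕ} (hlt : toLex (twist k x) < toLex (twist k y)) :
    lowBitsParity c k = decide (y c < x c) := by
  have hc := (isFirstDiff_twist h k).lt_of_toLex_lt hlt
  unfold twist at hc
  split_ifs at hc with hP
  · simpa [hP] using hc
  · simpa [hP] using hc.le

noncomputable def twistedBlock (b m k : ℕ) : List (Fin m → Fin b) :=
  (Finset.univ : Finset (Lex (Fin m → Fin b))).sort.map (twist k ∘ ofLex)

noncomputable def twistedFormation (b m s : ℕ) : List (Fin m → Fin b) :=
  ((List.range s).map (twistedBlock b m)).flatten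

theorem nodup_twistedBlock (k : ℕ) : (twistedBlock b m k).Nodup :=
  (Finset.sort_nodup _ _).map ((twist_involutive k).injective.comp ofLex.injective)

@[simp]
theorem mem_twistedBlock (k : ℕ) (x : Fin m → Fin b) : x ∈ twistedBlock b m k :=
  List.mem_map.mpr ⟨toLex (twist k x), by simp, by simp⟩

theorem toLex_twist_lt_of_pair_sublist {k : ℕ} {x y : Fin m → Fin b}
    (h : [x, y] <+ twistedBlock b m k) : toLex (twist k x) < toLex (twist k y) := by
  have hsub := h.map (toLex ∘ twist k)
  have hid : (toLex ∘ twist k) ∘ (twist k ∘ ofLex) = @id (Lex (Fin m → Fin b)) :=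
    funext fun x => by simp
  simp only [twistedBlock, List.map_map, hid, List.map_id] at hsub
  exact (Finset.sortedLT_sort _).pairwise.forall_sublist hsub

theorem IsFirstDiff.lowBitsParity_eq_xor {x y : Fin m → Fin b} {c : Fin m} {k : ℕ}
    {p q : List (Fin m → Fin b)} (h : IsFirstDiff x y c) (hxy : [x, y] <+ p)
    (hq : q <+ twistedBlock b m k) (hqp : q = p ∨ q = p.reverse) :
    lowBitsParity c k = xor (decide (q = p)) (decide (x c < y c)) := by
  have hne : x c ≠ y c := h.1
  by_cases hp : q = p
  · subst hp
    rw [h.lowBitsParity_eq_of_toLex_twist_lt (toLex_twist_lt_of_pair_sublist (hxy.trans hq))]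
    simp only [decide_true, Bool.true_xor]
    rcases hne.lt_or_gt with hlt | hlt <;> simp [hlt, hlt.not_gt]
  · have hyx : [y, x] <+ q := by simpa [hqp.resolve_left hp] using hxy.reverse
    have hlt := toLex_twist_lt_of_pair_sublist (hyx.trans hq)
    simp [h.symm.lowBitsParity_eq_of_toLex_twist_lt hlt, hp]

theorem filter_twistedBlock_mem {s : ℕ} {p : List (Fin m → Fin b)}
    {ps : List (List (Fin m → Fin b))} (hp : p.Nodup) (hlen : ps.length = s)
    (hps : ∀ q ∈ ps, q = p ∨ q = p.reverse)
    (h : ps.flatten <+ twistedFormation b m s) {k : ℕ} (hk : k < s) :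
    (twistedBlock b m k).filter (· ∈ p) ∈ ps := by
  have hblocks := List.eq_map_filter_of_flatten_sublist (S := (· ∈ p)) (n := p.length)
    (by simp [hlen]) (fun q hq => ?_) (fun B hB => ?_) h
  · rw [hblocks, List.map_map]
    exact List.mem_map_of_mem (List.mem_range.mpr hk)
  · rcases hps q hq with rfl | rfl <;> simp
  · obtain ⟨k, -, rfl⟩ := List.mem_map.mp hB
    exact List.length_filter_mem_of_nodup (nodup_twistedBlock k) hp fun x _ => mem_twistedBlock k x

theorem isFirstDiff_unique_of_sublist_twistedFormation {t : ℕ} (hm : m ≤ 2 ^ t)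
    {p : List (Fin m → Fin b)} {ps : List (List (Fin m → Fin b))} (hp : p.Nodup)
    (hlen : ps.length = t + 1) (hps : ∀ q ∈ ps, q = p ∨ q = p.reverse)
    (h : ps.flatten <+ twistedFormation b m (t + 1)) {x y x' y' : Fin m → Fin b} {c c' : Fin m}
    (hx : x ∈ p) (hy : y ∈ p) (hx' : x' ∈ p) (hy' : y' ∈ p)
    (hc : IsFirstDiff x y c) (hc' : IsFirstDiff x' y' c') : c = c' := by
  have hblock k (hk : k ≤ t) := filter_twistedBlock_mem hp hlen hps h (Nat.lt_succ_of_le hk)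
  -- the pattern of blocks equal to `p` determines the parity sequence of the first difference
  have hparity : ∀ x ∈ p, ∀ y ∈ p, ∀ c, IsFirstDiff x y c → ∃ d, ∀ k ≤ t,
      lowBitsParity c k = xor (decide ((twistedBlock b m k).filter (· ∈ p) = p)) d := by
    intro x hx y hy c hc
    rcases List.pair_sublist_or_of_mem hx hy hc.ne with hxy | hyx
    · exact ⟨_, fun k hk =>
        hc.lowBitsParity_eq_xor hxy List.filter_sublist (hps _ (hblock k hk))⟩
    · exact ⟨_, fun k hk =>
        hc.symm.lowBitsParity_eq_xor hyx List.filter_sublist (hps _ (hblock k hk))⟩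
  obtain ⟨d, hd⟩ := hparity x hx y hy c hc
  obtain ⟨d', hd'⟩ := hparity x' hx' y' hy' c' hc'
  exact Fin.ext (eq_of_lowBitsParity_eq_xor (c.2.trans_le hm) (c'.2.trans_le hm) hd hd')

theorem length_le_of_isFirstDiff_unique (hm : 0 < m) {p : List (Fin m → Fin b)} (hp : p.Nodup)
    (h : ∀ x ∈ p, ∀ y ∈ p, ∀ x' ∈ p, ∀ y' ∈ p, ∀ c c',
      IsFirstDiff x y c → IsFirstDiff x' y' c' → c = c') :
    p.length ≤ b := by
  obtain ⟨j, hj⟩ : ∃ j : Fin m, ∀ x ∈ p, ∀ y ∈ p, x j = y j → x = y := by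
    by_cases hpair : ∃ x₀ ∈ p, ∃ y₀ ∈ p, x₀ ≠ y₀
    · obtain ⟨x₀, hx₀, y₀, hy₀, hne₀⟩ := hpair
      obtain ⟨c₀, hc₀⟩ := exists_isFirstDiff hne₀
      refine ⟨c₀, fun x hx y hy hxy => by_contra fun hne => ?_⟩
      obtain ⟨c, hc⟩ := exists_isFirstDiff hne
      exact hc.1 (h x hx y hy x₀ hx₀ y₀ hy₀ c c₀ hc hc₀ ▸ hxy)
    · push Not at hpair
      exact ⟨⟨0, hm⟩, fun x hx y hy _ => hpair x hx y hy⟩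
  simpa using (hp.map_on hj).length_le_card

theorem length_le_of_binary_sublist_twistedFormation {t : ℕ} (hm0 : 0 < m) (hm : m ≤ 2 ^ t)
    {p : List (Fin m → Fin b)} {ps : List (List (Fin m → Fin b))} (hp : p.Nodup)
    (hlen : ps.length = t + 1) (hps : ∀ q ∈ ps, q = p ∨ q = p.reverse)
    (h : ps.flatten <+ twistedFormation b m (t + 1)) : p.length ≤ b :=
  length_le_of_isFirstDiff_unique hm0 hp fun _ hx _ hy _ hx' _ hy' _ _ =>
    isFirstDiff_unique_of_sublist_twistedFormation hm hp hlen hps h hx hy hx' hy'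

def vecToNat (x : Fin m → Fin b) : ℕ := finFunctionFinEquiv x

theorem vecToNat_injective : Injective (vecToNat (b := b) (m := m)) :=
  Fin.val_injective.comp finFunctionFinEquiv.injective

theorem isFormation_map_twistedFormation (b m s : ℕ) :
    IsFormation (b ^ m) s ((twistedFormation b m s).map vecToNat) := by
  refine ⟨(Finset.univ : Finset (Fin m → Fin b)).map ⟨vecToNat, vecToNat_injective⟩,
    (List.range s).map fun k => (twistedBlock b m k).map vecToNat, by simp, by simp, ?_, ?_⟩
  · simp only [List.mem_map, List.mem_range]
    rintro _ ⟨k, -, rfl⟩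
    exact ⟨(nodup_twistedBlock k).map vecToNat_injective, by ext; simp⟩
  · simp [twistedFormation, List.map_flatten, List.map_map, Function.comp_def]

theorem length_le_of_binary_sublist_map_twistedFormation {t : ℕ} (hm0 : 0 < m) (hm : m ≤ 2 ^ t)
    {f : (Fin m → Fin b) → ℕ} (hf : Injective f) {p : List ℕ} {ps : List (List ℕ)}
    (hp : p.Nodup)
    (hlen : ps.length = t + 1) (hps : ∀ q ∈ ps, q = p ∨ q = p.reverse)
    (h : ps.flatten <+ (twistedFormation b m (t + 1)).map f) : p.length ≤ b := by
  have hrange : ∀ x ∈ p, ∃ y, f y = x := fun x hx => by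
    obtain ⟨q, hq⟩ := List.exists_mem_of_length_pos (by omega : 0 < ps.length)
    have hxq : x ∈ q := by rcases hps q hq with rfl | rfl <;> simpa
    obtain ⟨y, -, rfl⟩ := List.mem_map.mp (h.subset (List.mem_flatten_of_mem hq hxq))
    exact ⟨y, rfl⟩
  by_cases hp0 : p = []
  · simp [hp0]
  obtain ⟨x₀, hx₀⟩ := List.exists_mem_of_ne_nil p hp0
  obtain ⟨y₀, -⟩ := hrange x₀ hx₀
  have : Nonempty (Fin m → Fin b) := ⟨y₀⟩
  set g := invFun f
  have hgf : g ∘ f = id := (leftInverse_invFun hf).comp_eq_id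
  have hpg : (p.map g).Nodup := hp.map_on fun x hx y hy hxy => by
    rw [← invFun_eq (hrange x hx), ← invFun_eq (hrange y hy)]
    exact congrArg f hxy
  simpa using length_le_of_binary_sublist_twistedFormation hm0 hm hpg
    (ps := ps.map (List.map g)) (by simpa using hlen)
    (by
      simp only [List.mem_map]
      rintro _ ⟨q, hq, rfl⟩
      rcases hps q hq with rfl | rfl <;> simp [List.map_reverse])
    (by simpa [List.map_flatten, hgf] using h.map g)

end Twist

theorem stmt1 (r s : ℕ) (hr : 1 ≤ r) (hs : 1 ≤ s) :
    ∃ F, IsFormation ((r - 1) ^ (2 ^ (s - 1))) s F ∧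
      ∀ G, IsBinaryFormation r s G → ¬ G.Sublist F := by
  obtain ⟨t, rfl⟩ : ∃ t, s = t + 1 := ⟨s - 1, by omega⟩
  rw [Nat.add_sub_cancel]
  refine ⟨_, isFormation_map_twistedFormation (r - 1) (2 ^ t) (t + 1), ?_⟩
  rintro _ ⟨A, p, ps, hA, hp, rfl, hlen, hps, rfl⟩ hG
  have hbound := length_le_of_binary_sublist_map_twistedFormation (Nat.two_pow_pos t) le_rfl
    vecToNat_injective hp hlen hps hG
  rw [List.toFinset_card_of_nodup hp] at hA
  omega
end

section
/- If u is a sequence beginning with letter a, then fw(au) = fw(u) + 1, where au denotes u with an additional copy of a prepended. -/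
/-!
Prepending a permutation to an `(r, s)`-formation gives an `(r, s+1)`-formation, and every letter of
the formation occurs in that permutation; so any occurrence of `u` in the last `s` permutations extends
to an occurrence of `a u` when `a` is a letter of `u`. Conversely, if every `(r, s+1)`-formation
contains `a a w`, prepend any permutation to an `(r, s)`-formation `G`: the first permutation has no
repeated letter, so it can host at most the first `a`, and `a w` already lies in `G`.
-/

def IsWidthBound (u : List ℕ) (s : ℕ) : Prop :=
  ∃ r, ∀ F, IsFormation r s F → Contains F u

theorem List.sublist_flatten_of_forall_mem {α : Type*} {l : List α} {ps : List (List α)}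
    (hmem : ∀ x ∈ l, ∀ p ∈ ps, x ∈ p) (hlen : l.length ≤ ps.length) : l.Sublist ps.flatten := by
  induction l generalizing ps with
  | nil => exact List.nil_sublist _
  | cons x l ih =>
    cases ps with
    | nil => simp at hlen
    | cons p ps =>
      have hx : [x].Sublist p := List.singleton_sublist.2 (hmem x mem_cons_self p mem_cons_self)
      have hl : l.Sublist ps.flatten :=
        ih (fun y hy q hq => hmem y (mem_cons_of_mem _ hy) q (mem_cons_of_mem _ hq))
          (by simpa using hlen)
      exact hx.append hl

theorem List.Nodup.sublist_of_cons_cons_sublist_append {α : Type*} {p G l : List α} {x : α}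
    (hp : p.Nodup) (h : (x :: x :: l).Sublist (p ++ G)) : (x :: l).Sublist G := by
  obtain ⟨l₁, l₂, heq, hl₁, hl₂⟩ := List.sublist_append_iff.1 h
  match l₁, heq with
  | [], heq =>
    simp only [List.nil_append] at heq
    exact (List.sublist_cons_self _ _).trans (heq ▸ hl₂)
  | [_], heq =>
    simp only [List.singleton_append, List.cons.injEq] at heq
    exact heq.2 ▸ hl₂
  | _ :: _ :: _, heq =>
    simp only [List.cons_append, List.cons.injEq] at heq
    obtain ⟨rfl, rfl, -⟩ := heq
    exact absurd ((List.nil_sublist _).cons_cons _ |>.cons_cons _ |>.trans hl₁)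
      (List.nodup_iff_sublist.1 hp x)

theorem Finset.exists_injective_mapsTo_of_card_eq (S A : Finset ℕ) (h : S.card = A.card) :
    ∃ f : ℕ → ℕ, Function.Injective f ∧ ∀ x ∈ S, f x ∈ A := by
  classical
  let e := S.equivOfCardEq h
  have hlt : ∀ b ∈ A, b < A.sup id + 1 := fun b hb => Nat.lt_succ_of_le (A.le_sup (f := id) hb)
  -- letters outside `S` are shifted past every element of `A`
  refine ⟨fun x => if hx : x ∈ S then (e ⟨x, hx⟩ : ℕ) else x + (A.sup id + 1), ?_, ?_⟩
  · intro x y hxy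
    by_cases hx : x ∈ S <;> by_cases hy : y ∈ S <;> simp only [hx, hy, dite_true, dite_false] at hxy
    · simpa using e.injective (Subtype.ext hxy)
    · have := hlt _ (e ⟨x, hx⟩).2; omega
    · have := hlt _ (e ⟨y, hy⟩).2; omega
    · omega
  · intro x hx
    simpa only [dif_pos hx] using (e ⟨x, hx⟩).2

theorem IsFormation.exists_eq_append {r s : ℕ} {F : List ℕ} (hF : IsFormation r (s + 1) F) :
    ∃ q G, F = q ++ G ∧ IsFormation r s G ∧ ∀ x ∈ G, x ∈ q := by
  obtain ⟨A, ps, hA, hlen, hp, rfl⟩ := hF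
  obtain ⟨q, ps, rfl⟩ := List.exists_cons_of_length_eq_add_one hlen
  refine ⟨q, ps.flatten, rfl, ⟨A, ps, hA, by simpa using hlen,
    fun p hp' => hp p (List.mem_cons_of_mem _ hp'), rfl⟩, fun x hx => ?_⟩
  obtain ⟨l, hl, hxl⟩ := List.mem_flatten.1 hx
  rw [← List.mem_toFinset, (hp q List.mem_cons_self).2, ← (hp l (List.mem_cons_of_mem _ hl)).2]
  exact List.mem_toFinset.2 hxl

theorem IsFormation.exists_nodup_append {r s : ℕ} {G : List ℕ} (hG : IsFormation r s G) :
    ∃ q : List ℕ, q.Nodup ∧ IsFormation r (s + 1) (q ++ G) := by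
  classical
  obtain ⟨A, ps, hA, hlen, hp, rfl⟩ := hG
  refine ⟨A.toList, A.nodup_toList, A, A.toList :: ps, hA, by simp [hlen], ?_, rfl⟩
  rintro q (_ | ⟨_, hq⟩)
  · exact ⟨A.nodup_toList, A.toList_toFinset⟩
  · exact hp q hq

theorem isWidthBound_length (u : List ℕ) : IsWidthBound u u.length := by
  classical
  refine ⟨u.toFinset.card, fun F hF => ?_⟩
  obtain ⟨A, ps, hA, hlen, hp, rfl⟩ := hF
  obtain ⟨f, hf, hfA⟩ := u.toFinset.exists_injective_mapsTo_of_card_eq A hA.symm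
  refine ⟨f, hf, List.sublist_flatten_of_forall_mem (fun y hy p hp' => ?_) (by simp [hlen])⟩
  obtain ⟨x, hx, rfl⟩ := List.mem_map.1 hy
  rw [← List.mem_toFinset, (hp p hp').2]
  exact hfA x (List.mem_toFinset.2 hx)

theorem not_isWidthBound_zero {u : List ℕ} (hu : u ≠ []) : ¬IsWidthBound u 0 := by
  rintro ⟨r, hr⟩
  obtain ⟨f, -, hs⟩ := hr [] ⟨Finset.range r, [], by simp, rfl, by simp, rfl⟩
  exact hu (List.map_eq_nil_iff.1 (List.sublist_nil.1 hs))

theorem fw_le_of_isWidthBound {u : List ℕ} {s : ℕ} (h : IsWidthBound u s) : fw u ≤ s :=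
  Nat.sInf_le h

theorem isWidthBound_fw (u : List ℕ) : IsWidthBound u (fw u) :=
  Nat.sInf_mem (s := {s | IsWidthBound u s}) ⟨u.length, isWidthBound_length u⟩

theorem IsWidthBound.cons_of_mem {u : List ℕ} {s b : ℕ} (h : IsWidthBound u s) (hb : b ∈ u) :
    IsWidthBound (b :: u) (s + 1) := by
  obtain ⟨r, hr⟩ := h
  refine ⟨r, fun F hF => ?_⟩
  obtain ⟨q, G, rfl, hG, hGq⟩ := hF.exists_eq_append
  obtain ⟨f, hf, hs⟩ := hr G hG
  have hfb : f b ∈ q := hGq _ (hs.subset (List.mem_map_of_mem hb))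
  exact ⟨f, hf, (List.singleton_sublist.2 hfb).append hs⟩

theorem IsWidthBound.of_cons_cons {a s : ℕ} {w : List ℕ} (h : IsWidthBound (a :: a :: w) (s + 1)) :
    IsWidthBound (a :: w) s := by
  obtain ⟨r, hr⟩ := h
  refine ⟨r, fun G hG => ?_⟩
  obtain ⟨q, hq, hqG⟩ := hG.exists_nodup_append
  obtain ⟨f, hf, hs⟩ := hr _ hqG
  exact ⟨f, hf, hq.sublist_of_cons_cons_sublist_append hs⟩

theorem stmt4 (a : ℕ) (u : List ℕ) (h : u.head? = some a) :
    fw (a :: u) = fw u + 1 := by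
  obtain ⟨w, rfl⟩ := List.head?_eq_some_iff.1 h
  apply le_antisymm
  · exact fw_le_of_isWidthBound ((isWidthBound_fw _).cons_of_mem List.mem_cons_self)
  · have hbound := isWidthBound_fw (a :: a :: w)
    obtain ⟨s, hs⟩ : ∃ s, fw (a :: a :: w) = s + 1 :=
      Nat.exists_eq_succ_of_ne_zero fun h0 =>
        not_isWidthBound_zero (List.cons_ne_nil a _) (h0 ▸ hbound)
    rw [hs] at hbound ⊢
    exact Nat.succ_le_succ (fw_le_of_isWidthBound hbound.of_cons_cons)
end

section
/- If u is a sequence with exactly two distinct letters and length t ≥ 2, then fw(u) = t - 1. -/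
/-!
Upper bound: `u` has two distinct adjacent letters `d e`. In a formation of `t - 1` permutations
of `r ≥ 2` letters, send `d e` to the first two letters of the permutation at that position;
every other letter of `u` then gets a whole permutation of its own, which contains its image.

Lower bound: for `s ≤ t - 2` take the formation whose `i`-th permutation is `I_r` or `D_r`
according as `uᵢ₊₁` is `a` or `b`. If `f` embeds `u`, restricting to the letters `f a, f b` turns
each permutation into a block `[x, σ x]`, or `[σ x, x]` for every block if `f a > f b`, where `x`
runs over `f u₂, …, f u_{s+1}` and `σ` swaps `f a` and `f b`. A nonempty word `v` never embeds
into the blocks `[σ x, x]`, `x ∈ v.dropLast`: its first letter can only match the second letter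
of the first block, which uses that block up. The other orientation follows by reversal.
-/

namespace List

variable {α : Type*}

theorem exists_eq_append_cons_cons_ne {l : List α} {a b : α} (ha : a ∈ l) (hb : b ∈ l)
    (hab : a ≠ b) : ∃ l₁ d e l₂, l = l₁ ++ d :: e :: l₂ ∧ d ≠ e := by
  by_contra! h
  have hchain : IsChain (· = ·) l :=
    isChain_iff_forall_rel_of_append_cons_cons.2 fun _ _ _ _ => h _ _ _ _
  exact hab ((isChain_iff_pairwise.1 hchain).forall ha hb hab)

theorem exists_eq_append_cons_cons_of_toFinset_card_eq_two [DecidableEq α] {l : List α}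
    (hl : l.toFinset.card = 2) :
    ∃ l₁ d e l₂, l = l₁ ++ d :: e :: l₂ ∧ d ≠ e ∧ ∀ c ∈ l, c = d ∨ c = e := by
  obtain ⟨a, b, hab, hlab⟩ := Finset.card_eq_two.1 hl
  obtain ⟨l₁, d, e, l₂, rfl, hde⟩ := exists_eq_append_cons_cons_ne
    (mem_toFinset.1 (hlab ▸ Finset.mem_insert_self a {b}))
    (mem_toFinset.1 (hlab ▸ Finset.mem_insert_of_mem (Finset.mem_singleton_self b))) hab
  have hlde : {d, e} = (l₁ ++ d :: e :: l₂).toFinset :=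
    Finset.eq_of_subset_of_card_le (by simp [Finset.insert_subset_iff])
      (by rw [hl, Finset.card_pair hde])
  exact ⟨l₁, d, e, l₂, rfl, hde, by simp [← mem_toFinset, ← hlde]⟩

theorem sublist_flatten_of_forall_mem_s7 {l : List α} {L : List (List α)}
    (hlen : l.length = L.length) (h : ∀ a ∈ l, ∀ B ∈ L, a ∈ B) : l <+ L.flatten := by
  induction l generalizing L with
  | nil => exact nil_sublist _
  | cons a l ih =>
    obtain _ | ⟨B, L⟩ := L
    · simp at hlen
    · rw [flatten_cons, ← singleton_append]
      exact (singleton_sublist.2 (h a mem_cons_self B mem_cons_self)).append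
        (ih (by simpa using hlen) fun c hc B' hB' =>
          h c (mem_cons_of_mem _ hc) B' (mem_cons_of_mem _ hB'))

theorem append_cons_cons_sublist_flatten {l₁ l₂ B : List α} {p q : α}
    {L₁ L₂ : List (List α)} (h₁ : l₁.length = L₁.length) (h₂ : l₂.length = L₂.length)
    (hmem₁ : ∀ a ∈ l₁, ∀ P ∈ L₁, a ∈ P) (hmem₂ : ∀ a ∈ l₂, ∀ P ∈ L₂, a ∈ P) :
    l₁ ++ p :: q :: l₂ <+ (L₁ ++ (p :: q :: B) :: L₂).flatten := by
  rw [flatten_append, flatten_cons, cons_append, cons_append]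
  have hl₂ : l₂ <+ B ++ L₂.flatten :=
    (sublist_flatten_of_forall_mem_s7 h₂ hmem₂).trans (sublist_append_right B _)
  exact (sublist_flatten_of_forall_mem_s7 h₁ hmem₁).append ((hl₂.cons_cons q).cons_cons p)

theorem not_sublist_flatMap_dropLast {σ : α → α} :
    ∀ {v : List α}, v ≠ [] → (∀ d ∈ v, σ d ≠ d) → ¬ v <+ v.dropLast.flatMap fun d => [σ d, d]
  | [_], _, _ => by simp
  | c :: d :: w, _, hσ => by
    intro h
    rw [dropLast_cons_cons, flatMap_cons, cons_append] at h
    have hc : c :: d :: w <+ c :: (d :: w).dropLast.flatMap fun d => [σ d, d] := by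
      rcases sublist_cons_iff.1 h with h | ⟨_, hr, _⟩
      · exact h
      · exact absurd (cons.inj hr).1.symm (hσ c mem_cons_self)
    exact not_sublist_flatMap_dropLast (cons_ne_nil _ _)
      (fun x hx => hσ x (mem_cons_of_mem _ hx)) (cons_sublist_cons.1 hc)

theorem not_sublist_flatMap_of_sublist_dropLast {σ : α → α} {v l : List α} (hv : v ≠ [])
    (hσ : ∀ d ∈ v, σ d ≠ d) (hl : l <+ v.dropLast) : ¬ v <+ l.flatMap fun d => [σ d, d] :=
  fun h => not_sublist_flatMap_dropLast hv hσ (h.trans (hl.flatMap _))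

theorem not_sublist_flatMap_of_sublist_tail {σ : α → α} {v l : List α} (hv : v ≠ [])
    (hσ : ∀ d ∈ v, σ d ≠ d) (hl : l <+ v.tail) : ¬ v <+ l.flatMap fun d => [d, σ d] := by
  intro h
  refine not_sublist_flatMap_of_sublist_dropLast (reverse_ne_nil_iff.2 hv)
    (fun d hd => hσ d (mem_reverse.1 hd)) (l := l.reverse) (by simpa using hl.reverse) ?_
  simpa [reverse_flatMap, Function.comp_def] using h.reverse

theorem filter_eq_pair_of_pairwise_lt [LinearOrder α] {l : List α} (hl : l.Pairwise (· < ·))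
    {x y : α} (hx : x ∈ l) (hy : y ∈ l) (hxy : x < y) {p : α → Bool}
    (hp : ∀ z, p z ↔ z = x ∨ z = y) : l.filter p = [x, y] :=
  (hl.sublist filter_sublist).eq_of_mem_iff (by simpa using hxy) fun z => by
    simp only [mem_filter, hp, mem_pair]
    exact ⟨And.right, fun hz => ⟨by rcases hz with rfl | rfl <;> assumption, hz⟩⟩

theorem tail_take_sublist_dropLast {l : List α} {n : ℕ} (h : n + 2 ≤ l.length) :
    l.tail.take n <+ l.dropLast := by
  have htake : l.tail.take n = (l.take (n + 1)).tail := by simp [tail_take_eq_take_tail]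
  rw [htake, dropLast_eq_take]
  exact (tail_sublist _).trans (take_sublist_take_left (by omega))

end List

theorem Equiv.exists_perm_apply_eq_pair {α : Type*} [DecidableEq α] {d e p q : α} (hde : d ≠ e)
    (hpq : p ≠ q) : ∃ σ : Equiv.Perm α, σ d = p ∧ σ e = q := by
  have hp : p ≠ swap d p e := by
    simpa only [swap_apply_left] using (swap d p).injective.ne hde
  exact ⟨swap (swap d p e) q * swap d p, by simp [swap_apply_of_ne_of_ne hp hpq], by simp⟩

open List

theorem contains_of_isFormation {u F : List ℕ} {r : ℕ} (hu : u.toFinset.card = 2) (hr : 2 ≤ r)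
    (hF : IsFormation r (u.length - 1) F) : Contains F u := by
  obtain ⟨l₁, d, e, l₂, rfl, hde, hletters⟩ := exists_eq_append_cons_cons_of_toFinset_card_eq_two hu
  obtain ⟨A, ps, rfl, hps, hperm, rfl⟩ := hF
  have hn : l₁.length < ps.length := by simp at hps; omega
  obtain ⟨p, q, B, hB⟩ : ∃ p q B, ps[l₁.length] = p :: q :: B := by
    obtain ⟨-, hA⟩ := hperm _ (getElem_mem hn)
    match hP : ps[l₁.length], hr with
    | p :: q :: B, _ => exact ⟨p, q, B, rfl⟩
    | [], hr | [_], hr => simp [← hA, hP] at hr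
  have hpq : p ≠ q := by
    have hnd := (hperm _ (getElem_mem hn)).1
    rw [hB, nodup_cons, mem_cons, not_or] at hnd
    exact hnd.1.1
  have hmem : ∀ P ∈ ps, p ∈ P ∧ q ∈ P := fun P hP => by
    simp only [← mem_toFinset, (hperm P hP).2, ← (hperm _ (getElem_mem hn)).2, hB]
    simp
  obtain ⟨σ, hσd, hσe⟩ := Equiv.exists_perm_apply_eq_pair hde hpq
  have hσ : ∀ c ∈ l₁ ++ d :: e :: l₂, ∀ P ∈ ps, σ c ∈ P := fun c hc P hP => by
    rcases hletters c hc with rfl | rfl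
    · exact hσd ▸ (hmem P hP).1
    · exact hσe ▸ (hmem P hP).2
  refine ⟨σ, σ.injective, ?_⟩
  rw [← take_append_drop l₁.length ps, drop_eq_getElem_cons hn, hB]
  simp only [map_append, map_cons, hσd, hσe]
  refine append_cons_cons_sublist_flatten (by simp; omega) (by simp at hps ⊢; omega) ?_ ?_
  all_goals
    simp only [mem_map, forall_exists_index, and_imp, forall_apply_eq_imp_iff₂]
    intro c hc P hP
  · exact hσ c (by simp [hc]) P (mem_of_mem_take hP)
  · exact hσ c (by simp [hc]) P (mem_of_mem_drop hP)

def wordFormation (a r : ℕ) (w : List ℕ) : List ℕ :=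
  w.flatMap fun c => if c = a then Ic r else Dc r

theorem isFormation_wordFormation (a r : ℕ) (w : List ℕ) :
    IsFormation r w.length (wordFormation a r w) := by
  have hnd : (Ic r).Nodup := nodup_range'
  refine ⟨(Ic r).toFinset, w.map fun c => if c = a then Ic r else Dc r, ?_, length_map _, ?_, rfl⟩
  · rw [toFinset_card_of_nodup hnd, Ic, length_range']
  · simp only [mem_map]
    rintro _ ⟨c, -, rfl⟩
    split_ifs
    exacts [⟨hnd, rfl⟩, ⟨nodup_reverse.2 hnd, toFinset_reverse⟩]

theorem mem_Ic_of_mem_wordFormation {a r z : ℕ} {w : List ℕ} (h : z ∈ wordFormation a r w) :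
    z ∈ Ic r := by
  obtain ⟨c, -, hz⟩ := mem_flatMap.1 h
  split_ifs at hz
  exacts [hz, mem_reverse.1 hz]

theorem filter_Ic_eq_pair {r x y : ℕ} (hx : x ∈ Ic r) (hy : y ∈ Ic r) (hxy : x ≠ y) :
    (Ic r).filter (· ∈ [x, y]) = if x < y then [x, y] else [y, x] := by
  split_ifs with h
  · exact filter_eq_pair_of_pairwise_lt (pairwise_lt_range' 1) hx hy h (by simp)
  · exact filter_eq_pair_of_pairwise_lt (pairwise_lt_range' 1) hy hx (by omega) (by simp [or_comm])

theorem filter_wordFormation {f : ℕ → ℕ} {a b r : ℕ} {w : List ℕ} (hab : a ≠ b)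
    (hw : ∀ c ∈ w, c = a ∨ c = b) (ha : f a ∈ Ic r) (hb : f b ∈ Ic r) (hfab : f a ≠ f b) :
    (wordFormation a r w).filter (· ∈ [f a, f b]) = (w.map f).flatMap fun z =>
      if f a < f b then [z, Equiv.swap (f a) (f b) z] else [Equiv.swap (f a) (f b) z, z] := by
  rw [wordFormation, filter_flatMap, flatMap_map]
  refine flatMap_congr fun c hc => ?_
  rcases hw c hc with rfl | rfl
  · rw [if_pos rfl, filter_Ic_eq_pair ha hb hfab, Equiv.swap_apply_left]
  · rw [if_neg hab.symm, Dc, filter_reverse, filter_Ic_eq_pair ha hb hfab, Equiv.swap_apply_right]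
    split_ifs <;> rfl

theorem not_contains_wordFormation {u : List ℕ} {a b r s : ℕ} (hab : a ≠ b)
    (hu : u.toFinset = {a, b}) (hs : s + 2 ≤ u.length) :
    ¬ Contains (wordFormation a r (u.tail.take s)) u := by
  rintro ⟨f, hf, hsub⟩
  have hletters : ∀ c ∈ u, c = a ∨ c = b := by simp [← mem_toFinset, hu]
  have hfab : f a ≠ f b := hf.ne hab
  have hv : u.map f ≠ [] := ne_nil_of_length_pos (by simp; omega)
  have hvab : ∀ z ∈ u.map f, z ∈ [f a, f b] := by
    simp only [mem_map, forall_exists_index, and_imp, forall_apply_eq_imp_iff₂]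
    intro c hc
    rcases hletters c hc with rfl | rfl <;> simp
  have hσ : ∀ z ∈ u.map f, Equiv.swap (f a) (f b) z ≠ z := fun z hz => by
    rcases mem_pair.1 (hvab z hz) with rfl | rfl
    · simpa using hfab.symm
    · simpa using hfab
  have hIc : ∀ c ∈ u, f c ∈ Ic r := fun c hc =>
    mem_Ic_of_mem_wordFormation (hsub.subset (mem_map_of_mem hc))
  have hsub' := hsub.filter (· ∈ [f a, f b])
  rw [filter_eq_self.2 (by simpa using hvab), filter_wordFormation hab
    (fun c hc => hletters c ((tail_sublist u).subset (mem_of_mem_take hc)))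
    (hIc a (by simp [← mem_toFinset, hu])) (hIc b (by simp [← mem_toFinset, hu])) hfab,
    map_take, map_tail] at hsub'
  rcases lt_or_gt_of_ne hfab with h | h
  · simp only [h, if_true] at hsub'
    exact not_sublist_flatMap_of_sublist_tail hv hσ (take_sublist _ _) hsub'
  · simp only [h.not_gt, if_false] at hsub'
    exact not_sublist_flatMap_of_sublist_dropLast hv hσ
      (tail_take_sublist_dropLast (by simpa)) hsub'

theorem stmt7_general (u : List ℕ) (t : ℕ) (h2 : u.toFinset.card = 2)
    (hl : u.length = t) : fw u = t - 1 := by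
  subst hl
  have hwidth : u.length - 1 ∈ {s | ∃ r, ∀ F, IsFormation r s F → Contains F u} :=
    ⟨2, fun _ hF => contains_of_isFormation h2 le_rfl hF⟩
  refine le_antisymm (Nat.sInf_le hwidth) (le_csInf ⟨_, hwidth⟩ ?_)
  rintro s ⟨r, hr⟩
  by_contra! hs
  obtain ⟨a, b, hab, hu⟩ := Finset.card_eq_two.1 h2
  have hF := isFormation_wordFormation a r (u.tail.take s)
  rw [length_take, length_tail, min_eq_left (by omega)] at hF
  exact not_contains_wordFormation hab hu (by omega) (hr _ hF)

theorem stmt7 (u : List ℕ) (t : ℕ) (h2 : u.toFinset.card = 2)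
    (hl : u.length = t) (ht : 2 ≤ t) : fw u = t - 1 :=
  stmt7_general u t h2 hl
end

section
/- For every l ≥ 2 and t ≥ 1, fw(up(l,t)) = 2t - 1, where up(l,t) is the sequence 12...l repeated t times. -/
/-! Upper bound: iterating Erdős–Szekeres over the `2t - 1` permutations of a large enough
formation leaves `l` letters on which every permutation is increasing or decreasing; by
pigeonhole `t` of them run the same way, and these `t` copies of the `l` letters form `up(l,t)`.

Lower bound: the letters playing `1` and `2` in `up(l,t)` alternate `2t` times. In the
formation `I_r D_r I_r ⋯` with `s` blocks, any two letters restrict to `x y y x x y ⋯`, which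
alternates only `s + 1` times, so `s ≥ 2t - 1`. -/

open Function

namespace List

variable {α : Type*}

theorem Sublist.filter_mem_eq [DecidableEq α] {s q : List α} (h : s <+ q) (hq : q.Nodup) :
    q.filter (· ∈ s) = s := by
  induction h with
  | slnil => rfl
  | cons x h ih =>
    obtain ⟨hx, hq⟩ := nodup_cons.mp hq
    rw [filter_cons_of_neg (by simpa using fun hxs => hx (h.subset hxs)), ih hq]
  | cons_cons x h ih =>
    obtain ⟨hx, hq⟩ := nodup_cons.mp hq
    rw [filter_cons_of_pos (by simp)]
    refine congrArg (x :: ·) ((filter_congr fun y hy => ?_).trans (ih hq))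
    simp only [mem_cons, show y ≠ x from fun e => hx (e ▸ hy), false_or]

theorem filter_mem_filter_mem_of_subset [DecidableEq α] (p : List α) {T T' : Finset α}
    (h : T' ⊆ T) : (p.filter (· ∈ T)).filter (· ∈ T') = p.filter (· ∈ T') := by
  rw [filter_filter]
  refine filter_congr fun x _ => ?_
  by_cases hx : x ∈ T'
  · simp [hx, h hx]
  · simp [hx]

theorem length_filter_mem [DecidableEq α] {p : List α} (hp : p.Nodup) {S : Finset α}
    (hS : ∀ x ∈ S, x ∈ p) : (p.filter (· ∈ S)).length = S.card := by
  rw [← toFinset_card_of_nodup (hp.filter _)]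
  congr 1
  ext x
  simpa using hS x

section Monotone

variable [LinearOrder α]

theorem exists_sublist_pairwise_lt_or_gt :
    ∀ (a b : ℕ) {q : List α}, q.Nodup → 2 ^ (a + b) ≤ q.length →
      ∃ s, s <+ q ∧ (a ≤ s.length ∧ s.Pairwise (· < ·) ∨ b ≤ s.length ∧ s.Pairwise (· > ·))
  | 0, _, _, _, _ => ⟨[], nil_sublist _, .inl ⟨le_rfl, .nil⟩⟩
  | _, 0, _, _, _ => ⟨[], nil_sublist _, .inr ⟨le_rfl, .nil⟩⟩
  | _ + 1, _ + 1, [], _, h => absurd h (by simp)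
  | a + 1, b + 1, x :: q, hq, h => by
    obtain ⟨hx, hq⟩ := nodup_cons.mp hq
    have hsplit := length_eq_length_filter_add (l := q) (x < ·)
    have hpow : 2 ^ (a + 1 + (b + 1)) = 2 * 2 ^ (a + (b + 1)) := by ring
    have hpow' : 2 ^ (a + 1 + (b + 1)) = 2 * 2 ^ (a + 1 + b) := by ring
    rw [length_cons] at h
    by_cases hbig : 2 ^ (a + (b + 1)) ≤ (q.filter (x < ·)).length
    · obtain ⟨s, hs, hinc | hdec⟩ := exists_sublist_pairwise_lt_or_gt a (b + 1) (hq.filter _) hbig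
      · refine ⟨x :: s, (hs.trans filter_sublist).cons_cons x, .inl ⟨by simpa using hinc.1, ?_⟩⟩
        exact pairwise_cons.2 ⟨fun y hy => by simpa using (mem_filter.1 (hs.subset hy)).2, hinc.2⟩
      · exact ⟨s, (hs.trans filter_sublist).cons x, .inr hdec⟩
    · obtain ⟨s, hs, hinc | hdec⟩ :=
        exists_sublist_pairwise_lt_or_gt (a + 1) b (hq.filter (fun y => !decide (x < y)))
          (by omega)
      · exact ⟨s, (hs.trans filter_sublist).cons x, .inl hinc⟩
      · refine ⟨x :: s, (hs.trans filter_sublist).cons_cons x, .inr ⟨by simpa using hdec.1, ?_⟩⟩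
        refine pairwise_cons.2 ⟨fun y hy => ?_, hdec.2⟩
        obtain ⟨hyq, hyx⟩ := mem_filter.1 (hs.subset hy)
        exact lt_of_le_of_ne (by simpa using hyx) fun e => hx (e ▸ hyq)
termination_by a b => a + b

def IsMonotoneOn (p : List α) (T : Finset α) : Prop :=
  (p.filter (· ∈ T)).Pairwise (· < ·) ∨ (p.filter (· ∈ T)).Pairwise (· > ·)

theorem IsMonotoneOn.mono {p : List α} {T T' : Finset α} (h : p.IsMonotoneOn T) (hT : T' ⊆ T) :
    p.IsMonotoneOn T' := by
  rw [IsMonotoneOn, ← filter_mem_filter_mem_of_subset p hT]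
  exact h.imp (Pairwise.filter _) (Pairwise.filter _)

theorem exists_finset_isMonotoneOn {p : List α} (hp : p.Nodup) {S : Finset α}
    (hSp : ∀ x ∈ S, x ∈ p) (m : ℕ) (hS : 2 ^ (m + m) ≤ S.card) :
    ∃ T ⊆ S, T.card = m ∧ p.IsMonotoneOn T := by
  rw [← length_filter_mem hp hSp] at hS
  obtain ⟨s, hs, hmono⟩ := exists_sublist_pairwise_lt_or_gt m m (hp.filter _) hS
  have hms : m ≤ s.length := hmono.elim (·.1) (·.1)
  set s' := s.take m
  have hs' : s' <+ p.filter (· ∈ S) := (take_sublist _ _).trans hs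
  have hs'S : s'.toFinset ⊆ S := fun x hx => by
    simpa using (mem_filter.1 (hs'.subset (mem_toFinset.1 hx))).2
  refine ⟨s'.toFinset, hs'S, ?_, ?_⟩
  · rw [toFinset_card_of_nodup (hs'.nodup (hp.filter _)), length_take_of_le hms]
  · have hrestrict : p.filter (· ∈ s'.toFinset) = s' := by
      rw [← filter_mem_filter_mem_of_subset p hs'S]
      simpa only [mem_toFinset] using hs'.filter_mem_eq (hp.filter _)
    rw [IsMonotoneOn, hrestrict]
    exact hmono.imp (·.2.sublist (take_sublist _ _)) (·.2.sublist (take_sublist _ _))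

theorem exists_finset_forall_isMonotoneOn :
    ∀ (ps : List (List α)) (m : ℕ) (S : Finset α), (∀ p ∈ ps, p.Nodup) →
      (∀ p ∈ ps, ∀ x ∈ S, x ∈ p) → (fun n => 2 ^ (n + n))^[ps.length] m ≤ S.card →
      ∃ T ⊆ S, T.card = m ∧ ∀ p ∈ ps, p.IsMonotoneOn T
  | [], m, S, _, _, hS => by
    obtain ⟨T, hTS, hT⟩ := Finset.exists_subset_card_eq hS
    exact ⟨T, hTS, hT, by simp⟩
  | p :: ps, m, S, hnodup, hmem, hS => by
    obtain ⟨T', hT'S, hT', hmono'⟩ :=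
      exists_finset_forall_isMonotoneOn ps (2 ^ (m + m)) S
        (fun q hq => hnodup q (mem_cons_of_mem _ hq)) (fun q hq => hmem q (mem_cons_of_mem _ hq))
        (by simpa [iterate_succ_apply] using hS)
    obtain ⟨T, hTT', hT, hmono⟩ := exists_finset_isMonotoneOn (hnodup p mem_cons_self)
      (fun x hx => hmem p mem_cons_self x (hT'S hx)) m hT'.ge
    refine ⟨T, hTT'.trans hT'S, hT, ?_⟩
    rintro q (_ | ⟨_, hq⟩)
    · exact hmono
    · exact (hmono' q hq).mono hTT'

theorem IsMonotoneOn.filter_eq_sort_or_reverse {p : List α} {T : Finset α}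
    (h : p.IsMonotoneOn T) (hT : ∀ x ∈ T, x ∈ p) :
    p.filter (· ∈ T) = T.sort (· ≤ ·) ∨ p.filter (· ∈ T) = (T.sort (· ≤ ·)).reverse := by
  have hsort : (T.sort (· ≤ ·)).Pairwise (· < ·) := T.sortedLT_sort.pairwise
  have hmem : ∀ x, x ∈ p.filter (· ∈ T) ↔ x ∈ T.sort (· ≤ ·) := fun x => by
    simpa using fun hx => hT x hx
  refine h.imp (fun h => h.eq_of_mem_iff hsort hmem) fun h => ?_
  rw [← (pairwise_reverse.2 h).eq_of_mem_iff hsort (by simpa using hmem), reverse_reverse]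

end Monotone

end List

open List

theorem rep_succ (u : List ℕ) (t : ℕ) : rep u (t + 1) = u ++ rep u t := by
  simp [rep, replicate_succ]

theorem length_rep (u : List ℕ) (t : ℕ) : (rep u t).length = t * u.length := by
  simp [rep, length_flatten]

theorem map_rep (f : ℕ → ℕ) (u : List ℕ) (t : ℕ) : (rep u t).map f = rep (u.map f) t := by
  simp [rep, map_flatten, map_replicate]

theorem rep_sublist_rep {u v : List ℕ} (h : u <+ v) (t : ℕ) : rep u t <+ rep v t := by
  induction t with
  | zero => exact .slnil
  | succ t ih => simpa [rep_succ] using h.append ih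

theorem rep_sublist_flatten {L : List ℕ} {P : List ℕ → Bool} :
    ∀ {ps : List (List ℕ)} {t : ℕ}, (∀ p ∈ ps, P p → L <+ p) → t ≤ ps.countP P →
      rep L t <+ ps.flatten
  | [], t, _, ht => by simp_all [rep]
  | p :: ps, t, hP, ht => by
    rw [flatten_cons]
    by_cases hp : P p
    · rw [countP_cons_of_pos hp] at ht
      obtain _ | t := t
      · simp [rep]
      · rw [rep_succ]
        exact (hP p mem_cons_self hp).append
          (rep_sublist_flatten (fun q hq => hP q (mem_cons_of_mem _ hq)) (by omega))
    · rw [countP_cons_of_neg hp] at ht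
      exact (rep_sublist_flatten (fun q hq => hP q (mem_cons_of_mem _ hq)) ht).trans
        (sublist_append_right _ _)

theorem exists_injective_map_Ic {L : List ℕ} (hL : L.Nodup) :
    ∃ f : ℕ → ℕ, Injective f ∧ (Ic L.length).map f = L := by
  -- outside `1, ..., L.length`, `f` is a shift past every letter of `L`
  have hbig : ∀ x ∈ L, x < L.sum + 1 := fun x hx => Nat.lt_succ_of_le (le_sum_of_mem hx)
  refine ⟨fun n => if h : 0 < n ∧ n ≤ L.length then L[n - 1] else L.sum + 1 + n, ?_, ?_⟩
  · intro a b hab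
    simp only at hab
    split_ifs at hab with ha hb hb
    · have := (hL.getElem_inj_iff).1 hab
      omega
    · have := hbig _ (getElem_mem (n := a - 1) (by omega)); omega
    · have := hbig _ (getElem_mem (n := b - 1) (by omega)); omega
    · omega
  · refine ext_getElem (by simp [Ic]) fun i h₁ h₂ => ?_
    simp only [Ic, getElem_map, getElem_range']
    rw [dif_pos ⟨by omega, by simp [Ic] at h₁; omega⟩]
    congr 1
    omega

theorem contains_upSeq_of_rep_sublist {L s : List ℕ} (hL : L.Nodup) {t : ℕ} (h : rep L t <+ s) :
    Contains s (upSeq L.length t) := by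
  obtain ⟨f, hf, hfL⟩ := exists_injective_map_Ic hL
  exact ⟨f, hf, by rwa [upSeq, map_rep, hfL]⟩

theorem contains_upSeq_flatten_of_sublist_or_reverse {L : List ℕ} (hL : L.Nodup)
    {ps : List (List ℕ)} {t : ℕ} (hps : ∀ p ∈ ps, L <+ p ∨ L.reverse <+ p) (ht : 2 * t - 1 ≤ ps.length) :
    Contains ps.flatten (upSeq L.length t) := by
  classical
  have hcount : ps.length ≤ ps.countP (fun p => L <+ p) + ps.countP (fun p => L.reverse <+ p) := by
    rw [length_eq_countP_add_countP (fun p => L <+ p)]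
    gcongr
    refine countP_mono_left fun p hp hnot => ?_
    simpa using (hps p hp).resolve_left (by simpa using hnot)
  rcases (by omega : t ≤ ps.countP (fun p => L <+ p) ∨ t ≤ ps.countP (fun p => L.reverse <+ p))
    with h | h
  · exact contains_upSeq_of_rep_sublist hL (rep_sublist_flatten (by simp) h)
  · simpa using contains_upSeq_of_rep_sublist (nodup_reverse.2 hL)
      (rep_sublist_flatten (fun p _ hp => by simpa using hp) h)

theorem contains_upSeq_of_isFormation {l t : ℕ} {F : List ℕ}
    (hF : IsFormation ((fun n => 2 ^ (n + n))^[2 * t - 1] l) (2 * t - 1) F) :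
    Contains F (upSeq l t) := by
  obtain ⟨A, ps, hA, hlen, hps, rfl⟩ := hF
  have hmem : ∀ p ∈ ps, ∀ x ∈ A, x ∈ p := fun p hp x hx => by
    simpa [← (hps p hp).2] using hx
  obtain ⟨T, hTA, hT, hmono⟩ := exists_finset_forall_isMonotoneOn ps l A
    (fun p hp => (hps p hp).1) hmem (by rw [hlen, hA])
  have hsub : ∀ p ∈ ps, T.sort (· ≤ ·) <+ p ∨ (T.sort (· ≤ ·)).reverse <+ p := fun p hp =>
    ((hmono p hp).filter_eq_sort_or_reverse fun x hx => hmem p hp x (hTA hx)).imp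
      (fun h => by rw [← h]; exact filter_sublist) (fun h => by rw [← h]; exact filter_sublist)
  simpa [hT] using contains_upSeq_flatten_of_sublist_or_reverse (T.sort_nodup _) hsub hlen.ge

section AltCat

variable {α : Type*}

def altCat (p : List α) : ℕ → List α
  | 0 => []
  | k + 1 => p ++ altCat p.reverse k

theorem flatten_map_range_eq_altCat (p : List α) (k : ℕ) :
    ((range k).map fun i => if i % 2 = 0 then p else p.reverse).flatten = altCat p k := by
  induction k generalizing p with
  | zero => rfl
  | succ k ih =>
    rw [range_succ_eq_map, map_cons, map_map, flatten_cons, altCat, ← ih p.reverse]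
    congr 3
    funext i
    rcases Nat.mod_two_eq_zero_or_one i with h | h <;> simp [Nat.succ_mod_two_eq_zero_iff, h]

theorem filter_altCat (P : α → Bool) (p : List α) (k : ℕ) :
    (altCat p k).filter P = altCat (p.filter P) k := by
  induction k generalizing p with
  | zero => rfl
  | succ k ih => simp [altCat, ih, filter_reverse]

theorem length_altCat (p : List α) (k : ℕ) : (altCat p k).length = k * p.length := by
  induction k generalizing p with
  | zero => simp [altCat]
  | succ k ih => simp [altCat, ih]; ring

variable [DecidableEq α]

theorem length_destutter'_altCat_pair_le (k : ℕ) (x y : α) :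
    ((altCat [x, y] k).destutter' (· ≠ ·) x).length ≤ k + 1 := by
  induction k generalizing x y with
  | zero => simp [altCat]
  | succ k ih =>
    have hcons : altCat [x, y] (k + 1) = x :: y :: altCat [y, x] k := rfl
    rw [hcons, destutter'_cons_neg _ (not_not.2 rfl)]
    by_cases hxy : x = y
    · subst hxy
      rw [destutter'_cons_neg _ (not_not.2 rfl)]
      exact (ih x x).trans (Nat.le_succ _)
    · rw [destutter'_cons_pos _ hxy, length_cons]
      exact Nat.succ_le_succ (ih y x)

theorem length_destutter_altCat_le {p : List α} (hp : p.length ≤ 2) (k : ℕ) :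
    ((altCat p k).destutter (· ≠ ·)).length ≤ k + 1 := by
  match p, k with
  | [x, y], k + 1 =>
    rw [show altCat [x, y] (k + 1) = x :: y :: altCat [y, x] k from rfl, destutter_cons',
      ← destutter'_cons_neg (b := x) _ (not_not.2 rfl)]
    exact length_destutter'_altCat_pair_le (k + 1) x y
  | [x, y], 0 => simp [altCat]
  | [], k | [_], k =>
    refine ((destutter_sublist _ _).length_le).trans ?_
    simp [length_altCat]

end AltCat

theorem altSeq_eq_altCat (r k : ℕ) : altSeq r k = altCat (Ic r) k :=
  flatten_map_range_eq_altCat (Ic r) k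

theorem isChain_rep_pair {a b : ℕ} (hab : a ≠ b) (t : ℕ) : (rep [a, b] t).IsChain (· ≠ ·) := by
  have key : ∀ t, (b :: rep [a, b] t).IsChain (· ≠ ·) := by
    intro t
    induction t with
    | zero => simp [rep]
    | succ t ih => simpa [rep_succ] using (ih.cons_cons hab).cons_cons hab.symm
  obtain _ | t := t
  · simp [rep]
  · simpa [rep_succ] using (key t).cons_cons hab

theorem not_contains_upSeq_altSeq {l t r s : ℕ} (hl : 2 ≤ l) (hs : s < 2 * t - 1) :
    ¬ Contains (altSeq r s) (upSeq l t) := by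
  rintro ⟨f, hf, hsub⟩
  set a := f 1
  set b := f 2
  have hab : a ≠ b := hf.ne (by norm_num)
  have hpair : [a, b] <+ (Ic l).map f := by
    obtain ⟨l, rfl⟩ := Nat.exists_eq_add_of_le' hl
    simp [Ic, range'_succ, a, b]
  have hup : rep ((Ic l).map f) t <+ altCat (Ic r) s := by
    rwa [upSeq, map_rep, altSeq_eq_altCat] at hsub
  have hword : rep [a, b] t <+ altCat ((Ic r).filter (· ∈ [a, b])) s := by
    have hletters : (rep [a, b] t).filter (· ∈ [a, b]) = rep [a, b] t :=
      filter_eq_self.2 (by simp [rep])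
    rw [← filter_altCat, ← hletters]
    exact ((rep_sublist_rep hpair t).trans hup).filter _
  have hp : ((Ic r).filter (· ∈ [a, b])).length ≤ 2 :=
    (((show (Ic r).Nodup from nodup_range').filter _).subperm (l₂ := [a, b])
      fun x hx => by simpa using (mem_filter.1 hx).2).length_le
  have hlen : t * 2 ≤ s + 1 := calc
    t * 2 = (rep [a, b] t).length := (length_rep [a, b] t).symm
    _ ≤ _ := (isChain_rep_pair hab t).length_le_length_destutter_ne hword
    _ ≤ s + 1 := length_destutter_altCat_le hp s
  omega

theorem isFormation_altSeq (r k : ℕ) : IsFormation r k (altSeq r k) := by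
  have hnodup : (Ic r).Nodup := nodup_range'
  refine ⟨(Ic r).toFinset, (range k).map fun i => if i % 2 = 0 then Ic r else Dc r,
    by rw [toFinset_card_of_nodup hnodup]; simp [Ic], by simp, ?_, rfl⟩
  simp only [mem_map, mem_range]
  rintro p ⟨i, -, rfl⟩
  split_ifs
  · exact ⟨hnodup, rfl⟩
  · exact ⟨nodup_reverse.2 hnodup, toFinset_reverse⟩

theorem stmt8_general (l t : ℕ) (hl : 2 ≤ l) :
    fw (upSeq l t) = 2 * t - 1 := by
  refine le_antisymm (Nat.sInf_le ⟨_, fun F => contains_upSeq_of_isFormation⟩) ?_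
  refine le_csInf ⟨_, _, fun F => contains_upSeq_of_isFormation⟩ fun s ⟨r, hr⟩ => ?_
  by_contra! hs
  exact not_contains_upSeq_altSeq hl hs (hr _ (isFormation_altSeq r s))

theorem stmt8 (l t : ℕ) (hl : 2 ≤ l) (ht : 1 ≤ t) :
    fw (upSeq l t) = 2 * t - 1 :=
  stmt8_general l t hl
end
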